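/- Let u(x) = ln(−ln|x|) for x ∈ ℝ² with 0 < |x| < 1/e, and let b(x) = −x/(|x|² ln|x|). Then for every such x, the function u is twice differentiable at x with gradient ∇u(x) = x/(|x|² ln|x|) and Laplacian Δu(x) = −1/(|x|² (ln|x|)²); consequently −Δu(x) + b(x)·∇u(x) = 0 for all x with 0 < |x| < 1/e. -/

import Mathlib

open MeasureTheory
open scoped ENNReal RealInnerProductSpace

noncomputable section

abbrev E2 : Type := EuclideanSpace ℝ (Fin 2)

/-- The drift `b(x) = -x/(|x|² ln|x|)`. -/
def bb (x : E2) : E2 := -((‖x‖ ^ 2 * Real.log ‖x‖)⁻¹) • x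

/-- The function `u(x) = ln(-ln|x|)`. -/
def uu (x : E2) : ℝ := Real.log (-Real.log ‖x‖)

/-- The gradient field `∇u(x) = x/(|x|² ln|x|)`. -/
def G (x : E2) : E2 := ((‖x‖ ^ 2 * Real.log ‖x‖)⁻¹) • x

/-!
Both `u` and `∇u` are radial: `u(x) = f(|x|)` with `f(t) = ln(-ln t)`, and `∇u(x) = g(|x|) x`
with `g(t) = 1/(t² ln t)`. The gradient of `f(|x|)` is `f'(r)/r · x`, and the derivative of
`g(|x|) x` is `g(r) I + (g'(r)/r) x ⊗ x`, whose trace in the plane is `2 g(r) + r g'(r)`; this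
gives `Δu = -1/(r² ln² r)`. Finally `b = -∇u`, so `b·∇u = -|∇u|² = -1/(r² ln² r) = Δu`.
-/

section Radial

variable {E : Type*} [NormedAddCommGroup E] [InnerProductSpace ℝ E] {x : E}

theorem hasFDerivAt_norm_of_ne_zero (hx : x ≠ 0) :
    HasFDerivAt (‖·‖) (‖x‖⁻¹ • innerSL ℝ x) x := by
  have hsqrt := (Real.hasDerivAt_sqrt (by positivity : ‖x‖ ^ 2 ≠ 0)).comp_hasFDerivAt x
    (hasStrictFDerivAt_norm_sq x).hasFDerivAt
  simp only [Function.comp_def, Real.sqrt_sq (norm_nonneg _)] at hsqrt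
  refine hsqrt.congr_fderiv ?_
  ext y
  simp only [one_div, mul_inv_rev, smul_apply, coe_innerSL_apply, nsmul_eq_mul, Nat.cast_ofNat,
    smul_eq_mul]
  field_simp

theorem HasDerivAt.hasGradientAt_comp_norm [CompleteSpace E] {f : ℝ → ℝ} {f' : ℝ}
    (hx : x ≠ 0) (hf : HasDerivAt f f' ‖x‖) :
    HasGradientAt (fun y => f ‖y‖) ((f' / ‖x‖) • x) x := by
  rw [hasGradientAt_iff_hasFDerivAt]
  refine (hf.comp_hasFDerivAt x (hasFDerivAt_norm_of_ne_zero hx)).congr_fderiv ?_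
  ext y
  simp [div_eq_mul_inv, mul_assoc]

theorem HasDerivAt.hasFDerivAt_smul_comp_norm {g : ℝ → ℝ} {g' : ℝ}
    (hx : x ≠ 0) (hg : HasDerivAt g g' ‖x‖) :
    HasFDerivAt (fun y => g ‖y‖ • y)
      (g ‖x‖ • ContinuousLinearMap.id ℝ E + ((g' / ‖x‖) • innerSL ℝ x).smulRight x) x :=
  ((hg.comp_hasFDerivAt x (hasFDerivAt_norm_of_ne_zero hx)).smul
    (hasFDerivAt_id x)).congr_fderiv (by simp [div_eq_mul_inv, mul_smul])

end Radial

theorem EuclideanSpace.sum_smul_id_add_smulRight_innerSL_single {ι : Type*} [Fintype ι]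
    [DecidableEq ι] (a c : ℝ) (x : EuclideanSpace ℝ ι) :
    ∑ i, (a • ContinuousLinearMap.id ℝ (EuclideanSpace ℝ ι) + (c • innerSL ℝ x).smulRight x)
      (EuclideanSpace.single i (1 : ℝ)) i = Fintype.card ι * a + c * ‖x‖ ^ 2 := by
  rw [EuclideanSpace.real_norm_sq_eq, Finset.mul_sum]
  simp [EuclideanSpace.inner_single_right, Finset.sum_add_distrib, sq, mul_assoc]

theorem hasDerivAt_log_neg_log {r : ℝ} (hr : r ≠ 0) (hl : Real.log r ≠ 0) :
    HasDerivAt (fun t => Real.log (-Real.log t)) (r * Real.log r)⁻¹ r := by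
  refine ((Real.hasDerivAt_log hr).neg.log (neg_ne_zero.mpr hl)).congr_deriv ?_
  simp only [Pi.neg_apply]
  field_simp

theorem hasDerivAt_inv_sq_mul_log {r : ℝ} (hr : r ≠ 0) (hl : Real.log r ≠ 0) :
    HasDerivAt (fun t => (t ^ 2 * Real.log t)⁻¹)
      (-(2 * Real.log r + 1) / (r ^ 3 * Real.log r ^ 2)) r := by
  refine (((hasDerivAt_pow 2 r).mul (Real.hasDerivAt_log hr)).inv
    (mul_ne_zero (pow_ne_zero 2 hr) hl)).congr_deriv ?_
  simp only [Pi.mul_apply]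
  field_simp
  ring

theorem hasGradientAt_uu {x : E2} (hx : x ≠ 0) (hl : Real.log ‖x‖ ≠ 0) :
    HasGradientAt uu (G x) x := by
  have h := (hasDerivAt_log_neg_log (norm_ne_zero_iff.mpr hx) hl).hasGradientAt_comp_norm hx
  rwa [show ((‖x‖ * Real.log ‖x‖)⁻¹ / ‖x‖) • x = G x by unfold G; congr 1; field_simp] at h

theorem exists_hasFDerivAt_G_sum_single {x : E2} (hx : x ≠ 0) (hl : Real.log ‖x‖ ≠ 0) :
    ∃ L : E2 →L[ℝ] E2, HasFDerivAt G L x ∧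
      ∑ i, L (EuclideanSpace.single i (1 : ℝ)) i = -(‖x‖ ^ 2 * Real.log ‖x‖ ^ 2)⁻¹ := by
  have hr : ‖x‖ ≠ 0 := norm_ne_zero_iff.mpr hx
  refine ⟨_, (hasDerivAt_inv_sq_mul_log hr hl).hasFDerivAt_smul_comp_norm hx, ?_⟩
  rw [EuclideanSpace.sum_smul_id_add_smulRight_innerSL_single]
  simp only [Fintype.card_fin, Nat.cast_ofNat]
  field_simp
  ring

theorem inner_bb_G (x : E2) : ⟪bb x, G x⟫ = -(‖x‖ ^ 2 * Real.log ‖x‖ ^ 2)⁻¹ := by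
  rw [bb, G, neg_smul, inner_neg_left, real_inner_smul_left, real_inner_smul_right,
    real_inner_self_eq_norm_sq]
  rcases eq_or_ne ‖x‖ 0 with h | h
  · simp [h]
  · rw [mul_inv, mul_inv]
    field_simp

/-- For `0 < |x| < 1/e`, `u(x) = ln(-ln|x|)` is twice differentiable at
`x` with gradient `∇u(x) = x/(|x|²ln|x|)` and Laplacian `Δu(x) = -1/(|x|²(ln|x|)²)`;
consequently `-Δu(x) + b(x)·∇u(x) = 0`. -/
theorem statement12 :
    ∀ x : E2, 0 < ‖x‖ → ‖x‖ < (Real.exp 1)⁻¹ →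
      HasGradientAt uu (G x) x ∧
      ∃ L : E2 →L[ℝ] E2, HasFDerivAt G L x ∧
        (∑ i, L (EuclideanSpace.single i (1 : ℝ)) i)
          = -(‖x‖ ^ 2 * Real.log ‖x‖ ^ 2)⁻¹ ∧
        -(∑ i, L (EuclideanSpace.single i (1 : ℝ)) i) + ⟪bb x, G x⟫ = 0 := by
  intro x hx hxe
  have hx0 : x ≠ 0 := norm_pos_iff.mp hx
  have hl : Real.log ‖x‖ ≠ 0 := by
    have := Real.log_lt_log hx hxe
    rw [Real.log_inv, Real.log_exp] at this
    linarith
  obtain ⟨L, hL, hΔ⟩ := exists_hasFDerivAt_G_sum_single hx0 hl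
  refine ⟨hasGradientAt_uu hx0 hl, L, hL, hΔ, ?_⟩
  rw [hΔ, inner_bb_G]
  ring
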